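/- arXiv:1602.04130 — 4 statements merged into one kernel-verified Lean document; each statement's English description precedes it below -/
import Mathlib

section
/- Let n ≥ 1 and A, B ∈ GL(n, ℂ) with [A,B] = λ·Iₙ where λ is a primitive n-th root of unity. Then A has n pairwise distinct eigenvalues; in fact if μ is any eigenvalue of A, then μ, λμ, λ²μ, ..., λ^{n-1}μ are all eigenvalues of A. -/
open Matrix

/-- Let `n ≥ 1` and `A, B ∈ GL(n, ℂ)` with `[A,B] = λ•1` where `λ` is a
primitive `n`-th root of unity.  Then if `μ` is any eigenvalue of `A`, all of
`μ, λμ, …, λ^{n-1}μ` are eigenvalues of `A`, and they are pairwise distinct (so `A`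
has `n` pairwise distinct eigenvalues). -/
theorem bad_subgroups_distinct_eigenvalues (n : ℕ) (hn : 1 ≤ n) (A B : GL (Fin n) ℂ) (l : ℂ)
    (hl : IsPrimitiveRoot l n)
    (h : (A : Matrix (Fin n) (Fin n) ℂ) * (B : Matrix (Fin n) (Fin n) ℂ) *
          ((A⁻¹ : GL (Fin n) ℂ) : Matrix (Fin n) (Fin n) ℂ) *
          ((B⁻¹ : GL (Fin n) ℂ) : Matrix (Fin n) (Fin n) ℂ) =
        l • (1 : Matrix (Fin n) (Fin n) ℂ))
    (μ : ℂ)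
    (hμ : ∃ v : Fin n → ℂ, v ≠ 0 ∧ (A : Matrix (Fin n) (Fin n) ℂ) *ᵥ v = μ • v) :
    (∀ k < n, ∃ v : Fin n → ℂ, v ≠ 0 ∧
        (A : Matrix (Fin n) (Fin n) ℂ) *ᵥ v = (l ^ k * μ) • v) ∧
      Function.Injective (fun k : Fin n => l ^ (k : ℕ) * μ) := by
  have key : (A : Matrix (Fin n) (Fin n) ℂ) * B = l • ((B : Matrix (Fin n) (Fin n) ℂ) * A) := by
    have h2 : ((A : Matrix (Fin n) (Fin n) ℂ) * B * (A⁻¹ : GL (Fin n) ℂ) *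
        (B⁻¹ : GL (Fin n) ℂ)) * ((B : Matrix (Fin n) (Fin n) ℂ) * A) =
        (l • (1 : Matrix (Fin n) (Fin n) ℂ)) * ((B : Matrix (Fin n) (Fin n) ℂ) * A) := by
      rw [h]
    calc (A : Matrix (Fin n) (Fin n) ℂ) * B
        = ((A : Matrix (Fin n) (Fin n) ℂ) * B * (A⁻¹ : GL (Fin n) ℂ) *
            (B⁻¹ : GL (Fin n) ℂ)) * ((B : Matrix (Fin n) (Fin n) ℂ) * A) := by
          have e1 : ((B⁻¹ : GL (Fin n) ℂ) : Matrix (Fin n) (Fin n) ℂ) *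
              ((B : Matrix (Fin n) (Fin n) ℂ) * A) = A := by
            rw [← mul_assoc, Units.inv_mul, one_mul]
          rw [mul_assoc ((A : Matrix (Fin n) (Fin n) ℂ) * B * (A⁻¹ : GL (Fin n) ℂ)), e1,
            mul_assoc, Units.inv_mul, mul_one]
      _ = l • ((B : Matrix (Fin n) (Fin n) ℂ) * A) := by rw [h2, smul_mul_assoc, one_mul]
  -- main induction
  have main : ∀ k : ℕ, ∃ v : Fin n → ℂ, v ≠ 0 ∧
      (A : Matrix (Fin n) (Fin n) ℂ) *ᵥ v = (l ^ k * μ) • v := by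
    intro k
    induction k with
    | zero => simpa using hμ
    | succ k ih =>
      obtain ⟨v, hv0, hv⟩ := ih
      refine ⟨(B : Matrix (Fin n) (Fin n) ℂ) *ᵥ v, ?_, ?_⟩
      · intro hz
        apply hv0
        have : ((B⁻¹ : GL (Fin n) ℂ) : Matrix (Fin n) (Fin n) ℂ) *ᵥ
            ((B : Matrix (Fin n) (Fin n) ℂ) *ᵥ v) = v := by
          rw [mulVec_mulVec, Units.inv_mul, one_mulVec]
        rw [hz, mulVec_zero] at this
        exact this.symm
      · rw [mulVec_mulVec, key, smul_mulVec, ← mulVec_mulVec, hv, mulVec_smul,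
          smul_smul, pow_succ]
        ring_nf
  have hμ0 : μ ≠ 0 := by
    obtain ⟨v, hv0, hv⟩ := hμ
    intro hz
    apply hv0
    have : ((A⁻¹ : GL (Fin n) ℂ) : Matrix (Fin n) (Fin n) ℂ) *ᵥ
        ((A : Matrix (Fin n) (Fin n) ℂ) *ᵥ v) = v := by
      rw [mulVec_mulVec, Units.inv_mul, one_mulVec]
    rw [hv, hz, zero_smul, mulVec_zero] at this
    exact this.symm
  refine ⟨fun k _ => main k, ?_⟩
  intro i j hij
  have hij' : l ^ (i : ℕ) = l ^ (j : ℕ) := mul_right_cancel₀ hμ0 hij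
  exact Fin.ext (hl.pow_inj i.isLt j.isLt hij')
end

section
/- Let p be an odd prime, ξ a primitive p-th root of unity, D(ξ) the diagonal matrix with entries ξⁱ (i = 0,...,p-1), and M_c the cyclic permutation matrix. If u ∈ SL(p,ℂ) satisfies π(u) commutes with π(D(ξ)) in PSL(p,ℂ) (i.e., [D(ξ),u] is a scalar matrix), then u = d·M_cᵏ for some diagonal matrix d ∈ SL(p,ℂ) and some 0 ≤ k ≤ p-1. Consequently the centralizer of the image of D(ξ) in PSL(p,ℂ) equals the image of the subgroup generated by the diagonal matrices of determinant 1 together with M_c. -/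
/-!
Conjugation by `D(ξ)` multiplies the `(i, j)` entry of a matrix by `ξ ^ (i - j)`. If
`D u D⁻¹ = ω u` for a scalar `ω`, then `ω ^ p = 1` forces `ω = ξ ^ k`, so every nonzero entry
of `u` sits on the `k`-th cyclic diagonal `i = j + k`, i.e. `u` is a diagonal matrix times
`M_c ^ k`. Conversely, diagonal matrices commute with `D(ξ)` and `D(ξ) M_c D(ξ)⁻¹ = ξ M_c`, and
the elements `v` with `[D(ξ), v]` central form a subgroup: the preimage of a centralizer in
`SL / Z`.
-/

open Matrix
open scoped commutatorElement

namespace Matrix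

variable {n R : Type*}

def shiftMatrix [DecidableEq n] [Add n] [Zero R] [One R] (c : n) : Matrix n n R :=
  of fun i j => if i = j + c then 1 else 0

@[simp]
lemma shiftMatrix_apply [DecidableEq n] [Add n] [Zero R] [One R] (c i j : n) :
    (shiftMatrix c : Matrix n n R) i j = if i = j + c then 1 else 0 :=
  rfl

lemma shiftMatrix_zero [DecidableEq n] [AddZeroClass n] [Zero R] [One R] :
    (shiftMatrix 0 : Matrix n n R) = 1 := by
  ext i j
  simp [one_apply]

section Shift

variable [DecidableEq n] [Fintype n] [Semiring R]

lemma shiftMatrix_mul_shiftMatrix [AddSemigroup n] (a b : n) :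
    (shiftMatrix a * shiftMatrix b : Matrix n n R) = shiftMatrix (b + a) := by
  ext i j
  rw [mul_apply, Finset.sum_eq_single (j + b) (fun l _ hl => by simp [hl]) (by simp)]
  simp [add_assoc]

lemma shiftMatrix_pow [AddMonoid n] (c : n) (k : ℕ) :
    (shiftMatrix c : Matrix n n R) ^ k = shiftMatrix (k • c) := by
  induction k with
  | zero => rw [pow_zero, zero_smul, shiftMatrix_zero]
  | succ k ih => rw [pow_succ, ih, shiftMatrix_mul_shiftMatrix, succ_nsmul']

end Shift

lemma eq_diagonal_mul_shiftMatrix [DecidableEq n] [Fintype n] [AddGroup n] [Semiring R]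
    {A : Matrix n n R} {c : n} (hA : ∀ i j, A i j ≠ 0 → i = j + c) :
    A = diagonal (fun i => A i (i - c)) * shiftMatrix c := by
  ext i j
  rw [diagonal_mul, shiftMatrix_apply]
  by_cases h : i = j + c
  · simp [h]
  · simpa [h] using not_imp_comm.mp (hA i j) h

def clockMatrix {K : Type*} [Semiring K] (p : ℕ) (ξ : K) : Matrix (ZMod p) (ZMod p) K :=
  diagonal fun i => ξ ^ i.val

lemma IsDiag.commute [DecidableEq n] [Fintype n] [CommSemiring R] {A B : Matrix n n R}
    (hA : A.IsDiag) (hB : B.IsDiag) : Commute A B := by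
  rw [← hA.diagonal_diag, ← hB.diagonal_diag]
  exact (commute_diagonal ..)

end Matrix

lemma IsPrimitiveRoot.pow_eq_pow_iff_natCast_eq {M : Type*} [CommMonoid M] {ξ : M} {p : ℕ}
    [NeZero p] (hξ : IsPrimitiveRoot ξ p) (a b : ℕ) : ξ ^ a = ξ ^ b ↔ (a : ZMod p) = b := by
  rw [(hξ.isOfFinOrder (NeZero.ne p)).pow_eq_pow_iff_modEq, ← hξ.eq_orderOf,
    ZMod.natCast_eq_natCast_iff]

lemma IsPrimitiveRoot.clockMatrix_mul_eq_smul_mul_iff {K : Type*} [CommRing K] [IsDomain K]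
    {ξ : K} {p : ℕ} [NeZero p] (hξ : IsPrimitiveRoot ξ p) (A : Matrix (ZMod p) (ZMod p) K)
    (k : ℕ) :
    clockMatrix p ξ * A = ξ ^ k • (A * clockMatrix p ξ) ↔ ∀ i j, A i j ≠ 0 → i = j + k := by
  have hpow (i j : ZMod p) : ξ ^ i.val = ξ ^ k * ξ ^ j.val ↔ i = j + k := by
    rw [← pow_add, hξ.pow_eq_pow_iff_natCast_eq]
    push_cast
    rw [ZMod.natCast_zmod_val, ZMod.natCast_zmod_val, add_comm]
  simp only [clockMatrix, ← Matrix.ext_iff, diagonal_mul, Matrix.smul_apply, mul_diagonal,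
    smul_eq_mul]
  refine forall₂_congr fun i j => ?_
  rw [← hpow, ← mul_assoc, mul_right_comm, mul_eq_mul_right_iff, or_iff_not_imp_right]

namespace Matrix.SpecialLinearGroup

variable {n R : Type*} [DecidableEq n] [Fintype n] [CommRing R]

lemma commutatorElement_mem_center_iff {A B : SpecialLinearGroup n R} :
    ⁅A, B⁆ ∈ Subgroup.center (SpecialLinearGroup n R) ↔
      ∃ r : R, r ^ Fintype.card n = 1 ∧ (A * B : Matrix n n R) = r • (B * A : Matrix n n R) := by
  have hAB : (⁅A, B⁆ * (B * A) : Matrix n n R) = A * B := by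
    simp only [← coe_mul]; group
  rw [mem_center_iff]
  refine exists_congr fun r => and_congr_right fun _ => ⟨fun h => ?_, fun h => ?_⟩
  · rw [← hAB, ← h, scalar_apply, ← smul_eq_diagonal_mul]
  · have hcomm : ⁅A, B⁆ = A * B * (B * A)⁻¹ := by group
    rw [hcomm, coe_mul, coe_mul, h, smul_mul_assoc, ← coe_mul, ← coe_mul, mul_inv_cancel,
      coe_one, smul_one_eq_diagonal, scalar_apply]

end Matrix.SpecialLinearGroup

lemma commutatorElement_mem_of_mem_closure {G : Type*} [Group G] {N : Subgroup G} [N.Normal]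
    {g : G} {S : Set G} (hS : ∀ x ∈ S, ⁅g, x⁆ ∈ N) {x : G} (hx : x ∈ Subgroup.closure S) :
    ⁅g, x⁆ ∈ N := by
  have hmem (y : G) : y ∈ (Subgroup.centralizer {(g : G ⧸ N)}).comap (QuotientGroup.mk' N) ↔
      ⁅g, y⁆ ∈ N := by
    rw [Subgroup.mem_comap, Subgroup.mem_centralizer_singleton_iff, ← QuotientGroup.eq_one_iff,
      ← QuotientGroup.mk'_apply N ⁅g, y⁆, map_commutatorElement,
      commutatorElement_eq_one_iff_commute]
    exact eq_comm
  exact (hmem x).mp (Subgroup.closure_le _ |>.mpr (fun y hy => (hmem y).mpr (hS y hy)) hx)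

theorem centralizer_of_Dxi_general (p : ℕ) [Fact p.Prime]
    (ξ : ℂ) (hξ : IsPrimitiveRoot ξ p)
    (Dm Mm : Matrix.SpecialLinearGroup (ZMod p) ℂ)
    (hD : (Dm : Matrix (ZMod p) (ZMod p) ℂ) = Matrix.diagonal fun i : ZMod p => ξ ^ i.val)
    (hM : (Mm : Matrix (ZMod p) (ZMod p) ℂ) =
      Matrix.of fun i j : ZMod p => if i = j + 1 then (1 : ℂ) else 0)
    (u : Matrix.SpecialLinearGroup (ZMod p) ℂ)
    (hu : ⁅Dm, u⁆ ∈ Subgroup.center (Matrix.SpecialLinearGroup (ZMod p) ℂ)) :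
    (∃ (d : Matrix (ZMod p) (ZMod p) ℂ) (k : ℕ), d.IsDiag ∧ d.det = 1 ∧ k ≤ p - 1 ∧
        (u : Matrix (ZMod p) (ZMod p) ℂ) = d * (Mm : Matrix (ZMod p) (ZMod p) ℂ) ^ k) ∧
    (∀ v : Matrix.SpecialLinearGroup (ZMod p) ℂ,
        ⁅Dm, v⁆ ∈ Subgroup.center (Matrix.SpecialLinearGroup (ZMod p) ℂ) ↔
          v ∈ Subgroup.closure
            ({x : Matrix.SpecialLinearGroup (ZMod p) ℂ |
                (x : Matrix (ZMod p) (ZMod p) ℂ).IsDiag} ∪ {Mm})) := by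
  change (Dm : Matrix (ZMod p) (ZMod p) ℂ) = clockMatrix p ξ at hD
  change (Mm : Matrix (ZMod p) (ZMod p) ℂ) = shiftMatrix 1 at hM
  have factor (v : Matrix.SpecialLinearGroup (ZMod p) ℂ) (hv : ⁅Dm, v⁆ ∈ Subgroup.center _) :
      ∃ (d : Matrix (ZMod p) (ZMod p) ℂ) (k : ℕ), d.IsDiag ∧ d.det = 1 ∧ k ≤ p - 1 ∧
        (v : Matrix (ZMod p) (ZMod p) ℂ) = d * (Mm : Matrix (ZMod p) (ZMod p) ℂ) ^ k := by
    obtain ⟨ω, hω, hcomm⟩ := Matrix.SpecialLinearGroup.commutatorElement_mem_center_iff.mp hv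
    obtain ⟨k, hk, rfl⟩ := hξ.eq_pow_of_pow_eq_one (ZMod.card p ▸ hω)
    have hv_eq := eq_diagonal_mul_shiftMatrix ((hξ.clockMatrix_mul_eq_smul_mul_iff v k).mp
      (hD ▸ hcomm))
    rw [← nsmul_one, ← shiftMatrix_pow, ← hM] at hv_eq
    refine ⟨_, k, isDiag_diagonal _, ?_, by omega, hv_eq⟩
    simpa [← Matrix.SpecialLinearGroup.coe_pow, v.prop, (Mm ^ k).prop] using
      (congrArg det hv_eq).symm
  refine ⟨factor u hu, fun v => ⟨fun hv => ?_, fun hv => ?_⟩⟩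
  · obtain ⟨d, k, hd, hdet, -, hv_eq⟩ := factor v hv
    let dS : Matrix.SpecialLinearGroup (ZMod p) ℂ := ⟨d, hdet⟩
    obtain rfl : v = dS * Mm ^ k := Subtype.ext <| by
      rw [Matrix.SpecialLinearGroup.coe_mul, Matrix.SpecialLinearGroup.coe_pow, hv_eq]
    exact mul_mem (Subgroup.subset_closure (Set.mem_union_left _ hd))
      (pow_mem (Subgroup.subset_closure (Set.mem_union_right _ (Set.mem_singleton Mm))) k)
  · refine commutatorElement_mem_of_mem_closure ?_ hv
    rintro x (hx | rfl)
    · have hDm : (Dm : Matrix (ZMod p) (ZMod p) ℂ).IsDiag := hD ▸ isDiag_diagonal _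
      have : Commute Dm x := Subtype.ext (hDm.commute hx)
      rw [commutatorElement_eq_one_iff_commute.mpr this]
      exact one_mem _
    · refine Matrix.SpecialLinearGroup.commutatorElement_mem_center_iff.mpr
        ⟨ξ, by rw [ZMod.card, hξ.pow_eq_one], ?_⟩
      simpa [hD] using (hξ.clockMatrix_mul_eq_smul_mul_iff _ 1).mpr (by simp [hM])

/-- Let `p` be an odd prime, `ξ` a primitive `p`-th root of unity,
`D(ξ) = diag(ξ⁰,…,ξ^{p-1})` and `M_c` the cyclic permutation matrix, both in `SL(p,ℂ)`.
If `u ∈ SL(p,ℂ)` has `[D(ξ), u]` central (i.e. the image of `u` in `PSL(p,ℂ)` commutes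
with that of `D(ξ)`), then `u = d · M_cᵏ` for a diagonal `d ∈ SL(p,ℂ)` and `0 ≤ k ≤ p-1`.
Consequently, an element of `SL(p,ℂ)` commutes with `D(ξ)` modulo the center iff it lies
in the subgroup generated by the diagonal matrices of determinant `1` together with `M_c`
(the `SL`-level form of `Z_{PSL(p,ℂ)}(D̄(ξ)) = D̄ ⋊ ⟨M̄_c⟩`). -/
theorem centralizer_of_Dxi (p : ℕ) [Fact p.Prime] (hodd : Odd p)
    (ξ : ℂ) (hξ : IsPrimitiveRoot ξ p)
    (Dm Mm : Matrix.SpecialLinearGroup (ZMod p) ℂ)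
    (hD : (Dm : Matrix (ZMod p) (ZMod p) ℂ) = Matrix.diagonal fun i : ZMod p => ξ ^ i.val)
    (hM : (Mm : Matrix (ZMod p) (ZMod p) ℂ) =
      Matrix.of fun i j : ZMod p => if i = j + 1 then (1 : ℂ) else 0)
    (u : Matrix.SpecialLinearGroup (ZMod p) ℂ)
    (hu : ⁅Dm, u⁆ ∈ Subgroup.center (Matrix.SpecialLinearGroup (ZMod p) ℂ)) :
    (∃ (d : Matrix (ZMod p) (ZMod p) ℂ) (k : ℕ), d.IsDiag ∧ d.det = 1 ∧ k ≤ p - 1 ∧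
        (u : Matrix (ZMod p) (ZMod p) ℂ) = d * (Mm : Matrix (ZMod p) (ZMod p) ℂ) ^ k) ∧
    (∀ v : Matrix.SpecialLinearGroup (ZMod p) ℂ,
        ⁅Dm, v⁆ ∈ Subgroup.center (Matrix.SpecialLinearGroup (ZMod p) ℂ) ↔
          v ∈ Subgroup.closure
            ({x : Matrix.SpecialLinearGroup (ZMod p) ℂ |
                (x : Matrix (ZMod p) (ZMod p) ℂ).IsDiag} ∪ {Mm})) :=
  centralizer_of_Dxi_general p ξ hξ Dm Mm hD hM u hu
end

section
/- Let p be a prime and g ∈ SL(p,ℂ) such that the commutator [g, M_c] lies in the center Z(SL(p,ℂ)) (i.e., is a scalar matrix). Then g = P(M_c)·D(ξ)ᵏ for some polynomial P ∈ ℂ[X] and some integer k ≥ 0. -/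
open Matrix Polynomial

lemma Mperm (p : ℕ) [NeZero p] :
    (Matrix.of fun i j : ZMod p => if i = j + 1 then (1:ℂ) else 0) =
    Equiv.Perm.permMatrix ℂ (Equiv.subRight (1 : ZMod p)) := by
  ext i j
  have : (i = j + 1) ↔ (Equiv.subRight (1 : ZMod p) i = j) := by
    rw [Equiv.subRight_apply, sub_eq_iff_eq_add]
  simp only [Equiv.Perm.permMatrix, PEquiv.toMatrix, Equiv.toPEquiv_apply, Option.mem_def,
    Option.some_inj, Matrix.of_apply, this]

lemma Mpow (p : ℕ) [NeZero p] (M : Matrix (ZMod p) (ZMod p) ℂ)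
    (hM : M = Matrix.of fun i j : ZMod p => if i = j + 1 then (1 : ℂ) else 0) (m : ℕ) :
    M ^ m = Matrix.of fun i j : ZMod p => if i = j + (m : ZMod p) then (1:ℂ) else 0 := by
  induction m with
  | zero => ext i j; simp [Matrix.one_apply]
  | succ n ih =>
    rw [pow_succ, ih, hM]
    ext i j
    simp only [Matrix.mul_apply, Matrix.of_apply, ite_mul, one_mul, zero_mul, mul_ite, mul_one,
      mul_zero, Finset.sum_ite_eq', Finset.mem_univ, if_true]
    push_cast
    rw [show j + ((n : ZMod p) + 1) = j + 1 + (n : ZMod p) by ring]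

lemma commute_shift (p : ℕ) [NeZero p] (M h : Matrix (ZMod p) (ZMod p) ℂ)
    (hM : M = Matrix.of fun i j : ZMod p => if i = j + 1 then (1 : ℂ) else 0)
    (hcomm : h * M = M * h) :
    ∃ P : Polynomial ℂ, h = Polynomial.aeval M P := by
  have step : ∀ i j : ZMod p, h (i + 1) (j + 1) = h i j := by
    intro i j
    have h1 := congrFun (congrFun hcomm (i + 1)) j
    rw [hM] at h1
    simp only [Matrix.mul_apply, Matrix.of_apply, mul_ite, mul_one, mul_zero, ite_mul, one_mul,
      zero_mul, Finset.sum_ite_eq', Finset.mem_univ, if_true] at h1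
    rw [h1]
    have : ∀ k : ZMod p, (if i + 1 = k + 1 then h k j else 0) = if k = i then h k j else 0 := by
      intro k
      congr 1
      rw [eq_iff_iff, add_left_inj, eq_comm]
    rw [Finset.sum_congr rfl (fun k _ => this k), Finset.sum_ite_eq', if_pos (Finset.mem_univ i)]
  have shiftn : ∀ (n : ℕ) (i j : ZMod p), h (i + n) (j + n) = h i j := by
    intro n
    induction n with
    | zero => simp
    | succ n ih =>
      intro i j
      push_cast
      rw [← add_assoc, ← add_assoc, step (i + n) (j + n), ih]
  have circ : ∀ i j : ZMod p, h i j = h (i - j) 0 := by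
    intro i j
    have := shiftn j.val (i - j) 0
    simpa using this
  refine ⟨∑ m ∈ Finset.range p, Polynomial.C (h ((m : ZMod p)) 0) * Polynomial.X ^ m, ?_⟩
  ext i j
  rw [map_sum]
  simp only [_root_.map_mul, Polynomial.aeval_C, Polynomial.aeval_X_pow, Matrix.sum_apply]
  have : ∀ m : ℕ, (algebraMap ℂ (Matrix (ZMod p) (ZMod p) ℂ) (h ((m : ZMod p)) 0) * M ^ m) i j
      = h ((m : ZMod p)) 0 * (if i = j + (m : ZMod p) then (1:ℂ) else 0) := by
    intro m
    rw [← Algebra.smul_def, Matrix.smul_apply, Mpow p M hM m]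
    simp
  rw [Finset.sum_congr rfl (fun m _ => this m)]
  rw [Finset.sum_eq_single ((i - j).val)]
  · rw [if_pos, circ i j]
    · simp [ZMod.natCast_val, ZMod.cast_id]
    · simp [ZMod.natCast_val, ZMod.cast_id]
  · intro m hm hne
    rw [if_neg, mul_zero]
    intro hij
    apply hne
    have : (m : ZMod p) = i - j := by rw [hij]; ring
    rw [← this, ZMod.val_cast_of_lt (Finset.mem_range.mp hm)]
  · intro habs
    exact absurd (Finset.mem_range.mpr (ZMod.val_lt _)) habs

/-- Let `p` be prime and `g ∈ SL(p,ℂ)` such that the commutator `[g, M_c]`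
is a scalar matrix.  Then `g = P(M_c) · D(ξ)ᵏ` for some polynomial `P ∈ ℂ[X]` and `k ≥ 0`. -/
theorem centralizer_Mc_up_to_center (p : ℕ) (hp : p.Prime) [NeZero p] (ξ : ℂ)
    (hξ : IsPrimitiveRoot ξ p)
    (M D g : Matrix (ZMod p) (ZMod p) ℂ)
    (hM : M = Matrix.of fun i j : ZMod p => if i = j + 1 then (1 : ℂ) else 0)
    (hD : D = Matrix.diagonal fun i : ZMod p => ξ ^ i.val)
    (hg : g.det = 1)
    (hc : ∃ c : ℂ, g * M * g⁻¹ * M⁻¹ = c • (1 : Matrix (ZMod p) (ZMod p) ℂ)) :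
    ∃ (P : Polynomial ℂ) (k : ℕ), g = (Polynomial.aeval M) P * D ^ k := by
  obtain ⟨c, hcc⟩ := hc
  have hMu : IsUnit M.det := by
    rw [hM, Mperm p, Matrix.det_permutation]
    rcases Int.units_eq_one_or (Equiv.Perm.sign (Equiv.subRight (1 : ZMod p))) with hs | hs <;>
      rw [hs] <;> simp
  have hgu : IsUnit g.det := by rw [hg]; exact isUnit_one
  -- commutation relation
  have e1 : g * M = c • (M * g) := by
    have h2 := congrArg (fun A => A * (M * g)) hcc
    simp only [Matrix.mul_assoc, Matrix.nonsing_inv_mul_cancel_left _ _ hMu,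
      Matrix.nonsing_inv_mul_cancel_left _ _ hgu, Matrix.nonsing_inv_mul _ hgu,
      Matrix.mul_one, smul_mul_assoc, one_mul] at h2
    exact h2
  -- c ^ p = 1
  have hcp : c ^ p = 1 := by
    have h3 := congrArg Matrix.det e1
    rw [Matrix.det_mul, Matrix.det_smul, Matrix.det_mul, hg, one_mul, mul_one,
      ZMod.card p] at h3
    have hMd : M.det ≠ 0 := hMu.ne_zero
    have h4 : (1 : ℂ) * M.det = c ^ p * M.det := by rw [one_mul]; exact h3
    exact (mul_right_cancel₀ hMd h4).symm
  obtain ⟨k, hk, hkc⟩ := hξ.eq_pow_of_pow_eq_one hcp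
  have hxp : ξ ^ p = 1 := hξ.pow_eq_one
  haveI : Fact (1 < p) := ⟨hp.one_lt⟩
  have hval : ∀ j : ZMod p, ξ ^ (j + 1).val = ξ * ξ ^ j.val := by
    intro j
    have h5 : (j + 1).val = (j.val + 1) % p := by rw [ZMod.val_add, ZMod.val_one]
    calc ξ ^ ((j + 1).val) = ξ ^ ((j.val + 1) % orderOf ξ) := by rw [h5, ← hξ.eq_orderOf]
      _ = ξ ^ (j.val + 1) := pow_mod_orderOf ξ _
      _ = ξ * ξ ^ j.val := by rw [pow_succ, mul_comm]
  have hDM : D * M = ξ • (M * D) := by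
    ext i j
    rw [hD, hM]
    rw [Matrix.smul_apply, Matrix.diagonal_mul, Matrix.mul_diagonal]
    simp only [Matrix.of_apply, smul_eq_mul]
    split_ifs with hij
    · rw [mul_one, one_mul, hij]; exact hval j
    · ring
  have hDMn : ∀ n : ℕ, D ^ n * M = ξ ^ n • (M * D ^ n) := by
    intro n
    induction n with
    | zero => simp
    | succ n ih =>
      calc D ^ (n+1) * M = D ^ n * (D * M) := by rw [pow_succ, Matrix.mul_assoc]
        _ = ξ • (D ^ n * M * D) := by rw [hDM, Matrix.mul_smul, Matrix.mul_assoc]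
        _ = ξ • ((ξ ^ n • (M * D ^ n)) * D) := by rw [ih]
        _ = ξ ^ (n+1) • (M * D ^ (n+1)) := by
            rw [smul_mul_assoc, smul_smul, Matrix.mul_assoc, ← pow_succ, ← pow_succ']
  -- h commutes with M
  set h : Matrix (ZMod p) (ZMod p) ℂ := g * D ^ (p - k) with hh
  have hcommh : h * M = M * h := by
    have key : ξ ^ (p - k) * c = 1 := by rw [← hkc, ← pow_add, Nat.sub_add_cancel hk.le, hxp]
    calc h * M = g * (D ^ (p-k) * M) := by rw [hh, Matrix.mul_assoc]
      _ = ξ ^ (p-k) • (g * M * D ^ (p-k)) := by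
          rw [hDMn, Matrix.mul_smul, ← Matrix.mul_assoc]
      _ = ξ ^ (p-k) • ((c • (M * g)) * D ^ (p-k)) := by rw [e1]
      _ = (ξ ^ (p-k) * c) • (M * (g * D ^ (p-k))) := by
          rw [smul_mul_assoc, smul_smul, Matrix.mul_assoc]
      _ = M * h := by rw [key, one_smul, hh]
  obtain ⟨P, hP⟩ := commute_shift p M h hM hcommh
  refine ⟨P, k, ?_⟩
  have hDp : D ^ p = 1 := by
    rw [hD, Matrix.diagonal_pow]
    have : ((fun i : ZMod p => ξ ^ i.val) ^ p) = fun _ => (1 : ℂ) := by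
      funext i
      simp only [Pi.pow_apply]
      rw [← pow_mul, mul_comm, pow_mul, hxp, one_pow]
    rw [this, Matrix.diagonal_one]
  rw [← hP, hh, Matrix.mul_assoc, ← pow_add, Nat.sub_add_cancel hk.le, hDp, Matrix.mul_one]
end

section
/- Let p be a prime and H̄ a bad irreducible subgroup of PSL(p,ℂ). Then, up to conjugation, the element D̄(ξ) lies in the centralizer of H̄ in PSL(p,ℂ). More precisely: any non-central element u ∈ SL(p,ℂ) whose image in PSL(p,ℂ) centralizes an irreducible subgroup is conjugate in SL(p,ℂ) to D(ξ) (for p odd). -/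
open Matrix

/-- `PSL(p, ℂ)` as the quotient of `SL(p, ℂ)` by its center. -/
abbrev PSL (p : ℕ) [Fact p.Prime] : Type :=
  Matrix.SpecialLinearGroup (ZMod p) ℂ ⧸ Subgroup.center (Matrix.SpecialLinearGroup (ZMod p) ℂ)

/-- The natural projection `π : SL(p,ℂ) → PSL(p,ℂ)`. -/
abbrev projPSL (p : ℕ) [Fact p.Prime] :
    Matrix.SpecialLinearGroup (ZMod p) ℂ →* PSL p :=
  QuotientGroup.mk' _

/-- A subgroup of `PSL(p,ℂ)` is irreducible if its preimage in `SL(p,ℂ)` acts irreducibly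
on `ℂᵖ`. -/
def IsIrredSubgroup (p : ℕ) [Fact p.Prime] (H : Subgroup (PSL p)) : Prop :=
  ∀ W : Submodule ℂ (ZMod p → ℂ),
    (∀ x : Matrix.SpecialLinearGroup (ZMod p) ℂ, projPSL p x ∈ H →
      ∀ v ∈ W, (x : Matrix (ZMod p) (ZMod p) ℂ) *ᵥ v ∈ W) →
    W = ⊥ ∨ W = ⊤

section aux

variable {p : ℕ} [Fact p.Prime]

private lemma pow_zmod_eq {ξ : ℂ} (hξp : ξ ^ p = 1) {a b : ℕ}
    (h : (a : ZMod p) = (b : ZMod p)) : ξ ^ a = ξ ^ b := by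
  have key : ∀ n : ℕ, ξ ^ n = ξ ^ (n % p) := by
    intro n
    conv_lhs => rw [← Nat.div_add_mod n p]
    rw [pow_add, pow_mul, hξp, one_pow, one_mul]
  rw [key a, key b, (ZMod.natCast_eq_natCast_iff' a b p).mp h]

private lemma conj_to_D (hodd : Odd p)
    (ξ : ℂ) (hξ : IsPrimitiveRoot ξ p)
    (Dm : Matrix.SpecialLinearGroup (ZMod p) ℂ)
    (hD : (Dm : Matrix (ZMod p) (ZMod p) ℂ) = Matrix.diagonal fun i : ZMod p => ξ ^ i.val)
    (H' : Subgroup (PSL p)) (hirr : IsIrredSubgroup p H')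
    (u : Matrix.SpecialLinearGroup (ZMod p) ℂ)
    (hu : u ∉ Subgroup.center (Matrix.SpecialLinearGroup (ZMod p) ℂ))
    (hcent : projPSL p u ∈ Subgroup.centralizer (H' : Set (PSL p))) :
    ∃ s : Matrix.SpecialLinearGroup (ZMod p) ℂ, s * u * s⁻¹ = Dm := by
  have hp : p.Prime := Fact.out
  haveI : NeZero p := ⟨hp.pos.ne'⟩
  have hcard : Fintype.card (ZMod p) = p := ZMod.card p
  -- commutator with elements of the preimage is a scalar
  have hscal : ∀ x : Matrix.SpecialLinearGroup (ZMod p) ℂ, projPSL p x ∈ H' →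
      ∃ ω : ℂ, ω ^ p = 1 ∧
        (u : Matrix (ZMod p) (ZMod p) ℂ) * x = ω • ((x : Matrix (ZMod p) (ZMod p) ℂ) * u) := by
    intro x hx
    have h1 : projPSL p x * projPSL p u = projPSL p u * projPSL p x :=
      Subgroup.mem_centralizer_iff.mp hcent _ hx
    have h2 : u * x * (x * u)⁻¹ ∈ Subgroup.center (Matrix.SpecialLinearGroup (ZMod p) ℂ) := by
      have hone : projPSL p (u * x * (x * u)⁻¹) = 1 := by
        rw [_root_.map_mul, _root_.map_inv, _root_.map_mul, _root_.map_mul, ← h1, mul_inv_cancel]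
      rw [← QuotientGroup.ker_mk' (Subgroup.center (Matrix.SpecialLinearGroup (ZMod p) ℂ))]
      exact hone
    obtain ⟨r, hr1, hr2⟩ := Matrix.SpecialLinearGroup.mem_center_iff.mp h2
    refine ⟨r, by rwa [hcard] at hr1, ?_⟩
    have h3 : u * x = (u * x * (x * u)⁻¹) * (x * u) := by group
    have h4 : ((u * x : Matrix.SpecialLinearGroup (ZMod p) ℂ) : Matrix (ZMod p) (ZMod p) ℂ)
        = (scalar (ZMod p) r) * ((x * u : Matrix.SpecialLinearGroup (ZMod p) ℂ) :
            Matrix (ZMod p) (ZMod p) ℂ) := by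
      rw [h3, Matrix.SpecialLinearGroup.coe_mul, hr2]
    rw [Matrix.SpecialLinearGroup.coe_mul, Matrix.SpecialLinearGroup.coe_mul] at h4
    rw [h4, Matrix.smul_eq_diagonal_mul]
    rfl
  -- case split
  by_cases hA : ∀ x : Matrix.SpecialLinearGroup (ZMod p) ℂ, projPSL p x ∈ H' →
      (u : Matrix (ZMod p) (ZMod p) ℂ) * x = (x : Matrix (ZMod p) (ZMod p) ℂ) * u
  · -- u commutes with everything: contradiction with non-centrality via irreducibility
    exfalso
    set f := Matrix.mulVecLin (u : Matrix (ZMod p) (ZMod p) ℂ) with hf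
    obtain ⟨c, hc⟩ := Module.End.exists_eigenvalue f
    have hinv : ∀ x : Matrix.SpecialLinearGroup (ZMod p) ℂ, projPSL p x ∈ H' →
        ∀ v ∈ Module.End.eigenspace f c, (x : Matrix (ZMod p) (ZMod p) ℂ) *ᵥ v ∈
          Module.End.eigenspace f c := by
      intro x hx v hv
      rw [Module.End.mem_eigenspace_iff] at hv ⊢
      rw [hf, Matrix.mulVecLin_apply] at hv ⊢
      rw [Matrix.mulVec_mulVec, hA x hx, ← Matrix.mulVec_mulVec, hv, Matrix.mulVec_smul]
    rcases hirr (Module.End.eigenspace f c) hinv with hbot | htop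
    · exact hc hbot
    · have huscalar : (u : Matrix (ZMod p) (ZMod p) ℂ) = c • (1 : Matrix (ZMod p) (ZMod p) ℂ) := by
        ext i j
        have hmem : (Pi.single j 1 : ZMod p → ℂ) ∈ Module.End.eigenspace f c :=
          htop ▸ Submodule.mem_top
        have h5 := Module.End.mem_eigenspace_iff.mp hmem
        rw [hf, Matrix.mulVecLin_apply] at h5
        have h6 := congrFun h5 i
        simp only [Matrix.mulVec_single, mul_one, Pi.smul_apply, smul_eq_mul] at h6
        rcases eq_or_ne i j with rfl | hij
        · simpa using h6
        · simpa [Pi.single_eq_of_ne hij, Matrix.one_apply_ne hij] using h6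
      apply hu
      apply Matrix.SpecialLinearGroup.mem_center_iff.mpr
      refine ⟨c, ?_, ?_⟩
      · have hdet := u.property
        rw [huscalar, Matrix.det_smul, Matrix.det_one, mul_one, hcard] at hdet
        rwa [hcard]
      · rw [huscalar]
        ext i j
        simp [Matrix.scalar_apply, Matrix.diagonal, Matrix.one_apply]
  · push_neg at hA
    obtain ⟨h, hh, hne⟩ := hA
    obtain ⟨lam, hlamp, hlc⟩ := hscal h hh
    have hlam1 : lam ≠ 1 := by
      intro h1
      rw [h1, one_smul] at hlc
      exact hne hlc
    have hordlam : orderOf lam = p := by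
      rcases (hp.eq_one_or_self_of_dvd _ (orderOf_dvd_of_pow_eq_one hlamp)) with h1 | h1
      · exact absurd (orderOf_eq_one_iff.mp h1) hlam1
      · exact h1
    have hlamprim : IsPrimitiveRoot lam p := hordlam ▸ IsPrimitiveRoot.orderOf lam
    -- powers of h
    have hpow : ∀ n : ℕ, (u : Matrix (ZMod p) (ZMod p) ℂ) * (h : Matrix (ZMod p) (ZMod p) ℂ) ^ n
        = lam ^ n • ((h : Matrix (ZMod p) (ZMod p) ℂ) ^ n * u) := by
      intro n
      induction n with
      | zero => simp
      | succ n ih =>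
        rw [pow_succ, ← mul_assoc, ih, Matrix.smul_mul, mul_assoc, hlc, pow_succ]
        rw [Matrix.mul_smul, smul_smul, mul_assoc]
    -- eigenvector of u
    set f := Matrix.mulVecLin (u : Matrix (ZMod p) (ZMod p) ℂ) with hf
    obtain ⟨c, hc⟩ := Module.End.exists_eigenvalue f
    obtain ⟨v₀, hv₀⟩ := hc.exists_hasEigenvector
    have hv0ne : v₀ ≠ 0 := hv₀.2
    have hv : (u : Matrix (ZMod p) (ZMod p) ℂ) *ᵥ v₀ = c • v₀ := by
      have := hv₀.apply_eq_smul
      rwa [hf, Matrix.mulVecLin_apply] at this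
    have hc0 : c ≠ 0 := by
      rintro rfl
      rw [zero_smul] at hv
      apply hv0ne
      have : ((u⁻¹ * u : Matrix.SpecialLinearGroup (ZMod p) ℂ) :
          Matrix (ZMod p) (ZMod p) ℂ) *ᵥ v₀ = 0 := by
        rw [Matrix.SpecialLinearGroup.coe_mul, ← Matrix.mulVec_mulVec, hv, Matrix.mulVec_zero]
      simpa using this
    -- the eigenvector family
    have hvec : ∀ a : ℕ, (u : Matrix (ZMod p) (ZMod p) ℂ) *ᵥ
        ((h : Matrix (ZMod p) (ZMod p) ℂ) ^ a *ᵥ v₀)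
        = (lam ^ a * c) • ((h : Matrix (ZMod p) (ZMod p) ℂ) ^ a *ᵥ v₀) := by
      intro a
      rw [Matrix.mulVec_mulVec, hpow a, Matrix.smul_mulVec, ← Matrix.mulVec_mulVec, hv,
        Matrix.mulVec_smul, smul_smul]
    have hvecne : ∀ a : ℕ, (h : Matrix (ZMod p) (ZMod p) ℂ) ^ a *ᵥ v₀ ≠ 0 := by
      intro a hzero
      apply hv0ne
      have : (((h ^ a)⁻¹ * h ^ a : Matrix.SpecialLinearGroup (ZMod p) ℂ) :
          Matrix (ZMod p) (ZMod p) ℂ) *ᵥ v₀ = 0 := by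
        rw [Matrix.SpecialLinearGroup.coe_mul, ← Matrix.mulVec_mulVec,
          Matrix.SpecialLinearGroup.coe_pow, hzero, Matrix.mulVec_zero]
      simpa using this
    have hEV : ∀ a : ℕ, Module.End.HasEigenvector f (lam ^ a * c)
        ((h : Matrix (ZMod p) (ZMod p) ℂ) ^ a *ᵥ v₀) :=
      fun a => ⟨Module.End.mem_eigenspace_iff.mpr
        (by simpa [hf, Matrix.mulVecLin_apply] using hvec a), hvecne a⟩
    -- general construction: families of eigenvectors give conjugation to a diagonal matrix
    have main : ∀ (μ : ZMod p → ℂ) (σ : ZMod p → ℕ), Function.Injective μ →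
        (∀ i, lam ^ (σ i) * c = μ i) →
        ∃ T : Matrix (ZMod p) (ZMod p) ℂ, IsUnit T.det ∧
          (u : Matrix (ZMod p) (ZMod p) ℂ) * T = T * diagonal μ := by
      intro μ σ hμinj hμ
      set w : ZMod p → (ZMod p → ℂ) :=
        fun i => (h : Matrix (ZMod p) (ZMod p) ℂ) ^ (σ i) *ᵥ v₀ with hw
      have hEVw : ∀ i, Module.End.HasEigenvector f (μ i) (w i) := fun i => hμ i ▸ hEV (σ i)
      have hli : LinearIndependent ℂ w := Module.End.eigenvectors_linearIndependent' f μ hμinj w hEVw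
      have hcard2 : Fintype.card (ZMod p) = Module.finrank ℂ (ZMod p → ℂ) :=
        (Module.finrank_fintype_fun_eq_card ℂ).symm
      let b := basisOfLinearIndependentOfCardEqFinrank hli hcard2
      have hb : ⇑b = w := coe_basisOfLinearIndependentOfCardEqFinrank hli hcard2
      set T : Matrix (ZMod p) (ZMod p) ℂ := Matrix.of (fun i j => w j i) with hT
      have hTmat : (Pi.basisFun ℂ (ZMod p)).toMatrix ⇑b = T := by
        ext i j
        rw [Module.Basis.toMatrix_apply, hb]
        simp [hT]
      haveI : Invertible T := hTmat ▸ (Pi.basisFun ℂ (ZMod p)).invertibleToMatrix b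
      refine ⟨T, Matrix.isUnit_det_of_invertible T, ?_⟩
      ext i j
      rw [Matrix.mul_apply, Matrix.mul_diagonal]
      have h7 := congrFun ((hEVw j).apply_eq_smul) i
      rw [hf, Matrix.mulVecLin_apply] at h7
      simpa [Matrix.mulVec, dotProduct, hT, mul_comm] using h7
    -- stage 1: compute the determinant to find that c is a p-th root of unity
    have hinj1 : Function.Injective fun j : ZMod p => lam ^ j.val * c := by
      intro a b hab
      simp only at hab
      have := mul_right_cancel₀ hc0 hab
      exact ZMod.val_injective p (hlamprim.pow_inj a.val_lt b.val_lt this)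
    obtain ⟨T1, hT1u, hT1⟩ := main (fun j : ZMod p => lam ^ j.val * c) (fun j => j.val) hinj1
      (fun i => rfl)
    have hdet1 : det (diagonal fun j : ZMod p => lam ^ j.val * c) = 1 := by
      have h8 := congrArg Matrix.det hT1
      rw [Matrix.det_mul, Matrix.det_mul, u.property, one_mul] at h8
      have h9 : T1.det * 1 = T1.det * det (diagonal fun j : ZMod p => lam ^ j.val * c) := by
        rw [mul_one]; exact h8
      exact (mul_left_cancel₀ hT1u.ne_zero h9).symm
    have hsumval : ∑ j : ZMod p, j.val = ∑ i ∈ Finset.range p, i := by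
      exact Finset.sum_nbij' (fun j : ZMod p => j.val) (fun i : ℕ => (i : ZMod p))
        (fun a _ => Finset.mem_range.mpr a.val_lt) (fun a _ => Finset.mem_univ _)
        (fun a _ => ZMod.natCast_rightInverse a)
        (fun a ha => ZMod.val_cast_of_lt (Finset.mem_range.mp ha))
        (fun a _ => rfl)
    have hdvd : p ∣ ∑ j : ZMod p, j.val := by
      obtain ⟨t, ht⟩ := hodd
      have h10 : (∑ j : ZMod p, j.val) * 2 = p * (2 * t) := by
        rw [hsumval, Finset.sum_range_id_mul_two]
        congr 1
        omega
      have : (∑ j : ZMod p, j.val) * 2 = (p * t) * 2 := by rw [h10]; ring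
      exact ⟨t, by omega⟩
    have hcp : c ^ p = 1 := by
      rw [Matrix.det_diagonal, Finset.prod_mul_distrib, Finset.prod_pow_eq_pow_sum,
        Finset.prod_const, Finset.card_univ, hcard] at hdet1
      rwa [orderOf_dvd_iff_pow_eq_one.mp (hordlam ▸ hdvd), one_mul] at hdet1
    -- express c and lam as powers of ξ
    obtain ⟨m₀, hm₀lt, hm₀⟩ := hξ.eq_pow_of_pow_eq_one hcp
    obtain ⟨k₀, hk₀lt, hk₀⟩ := hξ.eq_pow_of_pow_eq_one hlamp
    have hk₀ne : (k₀ : ZMod p) ≠ 0 := by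
      intro h0
      have hdvd0 : p ∣ k₀ := (ZMod.natCast_eq_zero_iff k₀ p).mp h0
      have hk00 : k₀ = 0 := Nat.eq_zero_of_dvd_of_lt hdvd0 hk₀lt
      exact hlam1 (by rw [← hk₀, hk00, pow_zero])
    -- stage 2: reindexed eigenbasis realizing D(ξ)
    set σ2 : ZMod p → ZMod p := fun i => ((k₀ : ZMod p))⁻¹ * (i - (m₀ : ZMod p)) with hσ2
    have hμ2 : ∀ i : ZMod p, lam ^ (σ2 i).val * c = ξ ^ i.val := by
      intro i
      rw [← hm₀, ← hk₀, ← pow_mul, ← pow_add]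
      apply pow_zmod_eq hξ.pow_eq_one
      push_cast
      rw [ZMod.natCast_val, ZMod.cast_id, ZMod.natCast_val, ZMod.cast_id, hσ2]
      simp only
      rw [← mul_assoc, mul_inv_cancel₀ hk₀ne, one_mul, sub_add_cancel]
    have hinj2 : Function.Injective fun i : ZMod p => ξ ^ i.val := by
      intro a b hab
      exact ZMod.val_injective p (hξ.pow_inj a.val_lt b.val_lt hab)
    obtain ⟨T, hTu, hT⟩ := main (fun i : ZMod p => ξ ^ i.val) (fun i => (σ2 i).val) hinj2 hμ2
    rw [← hD] at hT
    -- rescale T to have determinant one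
    obtain ⟨α, hα⟩ := IsAlgClosed.exists_pow_nat_eq (T.det)⁻¹ hp.pos
    have hα0 : α ≠ 0 := by
      intro h0
      rw [h0, zero_pow hp.pos.ne'] at hα
      exact hTu.ne_zero (inv_eq_zero.mp hα.symm)
    have hdetS : (α • T).det = 1 := by
      rw [Matrix.det_smul, hcard, hα, inv_mul_cancel₀ hTu.ne_zero]
    set S : Matrix.SpecialLinearGroup (ZMod p) ℂ := ⟨α • T, hdetS⟩ with hS
    haveI : Invertible ((S : Matrix (ZMod p) (ZMod p) ℂ)) :=
      (S : Matrix (ZMod p) (ZMod p) ℂ).invertibleOfIsUnitDet (by rw [S.property]; exact isUnit_one)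
    refine ⟨S⁻¹, ?_⟩
    rw [inv_inv]
    apply Subtype.ext
    rw [Matrix.SpecialLinearGroup.coe_mul, Matrix.SpecialLinearGroup.coe_mul]
    have hSinv : ((S⁻¹ : Matrix.SpecialLinearGroup (ZMod p) ℂ) : Matrix (ZMod p) (ZMod p) ℂ)
        = (S : Matrix (ZMod p) (ZMod p) ℂ)⁻¹ := by
      rw [Matrix.SpecialLinearGroup.coe_inv, Matrix.inv_def, S.property, Ring.inverse_one, one_smul]
    rw [hSinv]
    have hUS : (u : Matrix (ZMod p) (ZMod p) ℂ) * (S : Matrix (ZMod p) (ZMod p) ℂ)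
        = (S : Matrix (ZMod p) (ZMod p) ℂ) * (Dm : Matrix (ZMod p) (ZMod p) ℂ) := by
      show (u : Matrix (ZMod p) (ZMod p) ℂ) * (α • T) = (α • T) * (Dm : Matrix (ZMod p) (ZMod p) ℂ)
      rw [Matrix.mul_smul, hT, Matrix.smul_mul]
    rw [mul_assoc, hUS, Matrix.inv_mul_cancel_left_of_invertible]

end aux

/-- **Proposition 2.2.** Let `p` be an odd prime and `H̄` a bad subgroup of
`PSL(p,ℂ)`.  Then, up to conjugation, `D̄(ξ)` lies in the centralizer of `H̄`.
More precisely, any non-central `u ∈ SL(p,ℂ)` whose image in `PSL(p,ℂ)` centralizes an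
irreducible subgroup is conjugate in `SL(p,ℂ)` to `D(ξ)`. -/
theorem Dxi_in_centralizer_of_bad (p : ℕ) [Fact p.Prime] (hodd : Odd p)
    (ξ : ℂ) (hξ : IsPrimitiveRoot ξ p)
    (Dm : Matrix.SpecialLinearGroup (ZMod p) ℂ)
    (hD : (Dm : Matrix (ZMod p) (ZMod p) ℂ) = Matrix.diagonal fun i : ZMod p => ξ ^ i.val)
    (H : Subgroup (PSL p)) (hirr : IsIrredSubgroup p H)
    (hbad : Subgroup.center (PSL p) < Subgroup.centralizer (H : Set (PSL p))) :
    (∃ g : PSL p, projPSL p Dm ∈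
        Subgroup.centralizer ((Subgroup.map (MulAut.conj g).toMonoidHom H : Subgroup (PSL p)) :
          Set (PSL p))) ∧
    (∀ (H' : Subgroup (PSL p)), IsIrredSubgroup p H' →
      ∀ u : Matrix.SpecialLinearGroup (ZMod p) ℂ,
        u ∉ Subgroup.center (Matrix.SpecialLinearGroup (ZMod p) ℂ) →
        projPSL p u ∈ Subgroup.centralizer (H' : Set (PSL p)) →
        ∃ s : Matrix.SpecialLinearGroup (ZMod p) ℂ, s * u * s⁻¹ = Dm) := by
  constructor
  · obtain ⟨ub, hubc, hubnc⟩ := SetLike.exists_of_lt hbad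
    obtain ⟨u, rfl⟩ := QuotientGroup.mk'_surjective
      (Subgroup.center (Matrix.SpecialLinearGroup (ZMod p) ℂ)) ub
    have hu : u ∉ Subgroup.center (Matrix.SpecialLinearGroup (ZMod p) ℂ) := by
      intro hmem
      apply hubnc
      have h1 : projPSL p u = 1 := by
        have : u ∈ (projPSL p).ker := by
          rw [QuotientGroup.ker_mk']
          exact hmem
        exact this
      show QuotientGroup.mk' _ u ∈ _
      rw [show (QuotientGroup.mk' _ u : PSL p) = projPSL p u from rfl, h1]
      exact Subgroup.one_mem _
    obtain ⟨s, hs⟩ := conj_to_D hodd ξ hξ Dm hD H hirr u hu hubc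
    refine ⟨projPSL p s, ?_⟩
    rw [Subgroup.mem_centralizer_iff]
    rintro x ⟨y, hy, rfl⟩
    have hcomm : y * projPSL p u = projPSL p u * y :=
      Subgroup.mem_centralizer_iff.mp hubc y hy
    have hDm : projPSL p Dm = projPSL p s * projPSL p u * (projPSL p s)⁻¹ := by
      rw [← hs, _root_.map_mul, _root_.map_mul, _root_.map_inv]
    set g := projPSL p s with hg
    have hx : (MulAut.conj g).toMonoidHom y = g * y * g⁻¹ := rfl
    rw [hx, hDm]
    have h1 : g * y * g⁻¹ * (g * projPSL p u * g⁻¹) = g * (y * projPSL p u) * g⁻¹ := by group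
    have h2 : g * projPSL p u * g⁻¹ * (g * y * g⁻¹) = g * (projPSL p u * y) * g⁻¹ := by group
    rw [h1, h2, hcomm]
  · intro H' hirr' u hu hc
    exact conj_to_D hodd ξ hξ Dm hD H' hirr' u hu hc
end
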